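/- Let r ∈ (2,∞). There exists a constant C = C(r) such that for all measurable u₁, u₂ : ℝ² → ℂ for which all norms on the right-hand side are finite, ‖ u₁(x) ∫_{ℝ²} log(|x−y|/⟨x⟩) |u₁(y)|² dy − u₂(x) ∫_{ℝ²} log(|x−y|/⟨x⟩) |u₂(y)|² dy ‖_{L²_x} ≤ C (‖u₁‖_{L²}² + ‖(log⟨·⟩)^{1/2} u₁‖_{L²}²)(‖u₁−u₂‖_{L²} + ‖u₁−u₂‖_{L^r}) + C (‖u₁‖_{L²} + ‖u₂‖_{L²} + ‖(log⟨·⟩) u₁‖_{L²} + ‖(log⟨·⟩) u₂‖_{L²})(‖u₂‖_{L²} + ‖u₂‖_{L^r}) ‖u₁−u₂‖_{L²}. -/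

import Mathlib

open MeasureTheory ENNReal NNReal

noncomputable section

abbrev E2 := EuclideanSpace ℝ (Fin 2)

/-- The Japanese bracket `⟨x⟩ = (1+|x|²)^{1/2}`. -/
noncomputable def jbr (x : E2) : ℝ := Real.sqrt (1 + ‖x‖ ^ 2)

/-! ### Auxiliary facts about the Japanese bracket -/

lemma ofReal_norm_eq_coe_nnnorm {F : Type*} [SeminormedAddCommGroup F] (a : F) :
    ENNReal.ofReal ‖a‖ = (‖a‖₊ : ℝ≥0∞) := ofReal_norm a

lemma jbr_sq (x : E2) : jbr x ^ 2 = 1 + ‖x‖ ^ 2 := Real.sq_sqrt (by positivity)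

lemma jbr_nonneg (x : E2) : 0 ≤ jbr x := Real.sqrt_nonneg _

lemma jbr_ge_one (x : E2) : 1 ≤ jbr x := by
  nlinarith [jbr_sq x, jbr_nonneg x, sq_nonneg ‖x‖, sq_nonneg (jbr x - 1)]

lemma jbr_pos (x : E2) : 0 < jbr x := lt_of_lt_of_le one_pos (jbr_ge_one x)

lemma log_jbr_nonneg (x : E2) : 0 ≤ Real.log (jbr x) := Real.log_nonneg (jbr_ge_one x)

lemma norm_sub_le_jbr_mul (x y : E2) : ‖x - y‖ ≤ jbr x * jbr y := by
  have h1 : ‖x - y‖ ≤ ‖x‖ + ‖y‖ := norm_sub_le x y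
  have hx : (0:ℝ) ≤ ‖x‖ := norm_nonneg x
  have hy : (0:ℝ) ≤ ‖y‖ := norm_nonneg y
  have hP := jbr_pos x; have hQ := jbr_pos y
  have hPs := jbr_sq x; have hQs := jbr_sq y
  nlinarith [sq_nonneg (1 - ‖x‖ * ‖y‖), mul_pos hP hQ, sq_nonneg (jbr x * jbr y - ‖x‖ - ‖y‖)]

lemma jbr_le (x y : E2) : jbr x ≤ 2 * max 1 ‖x - y‖ * jbr y := by
  have hx : ‖x‖ ≤ ‖x - y‖ + ‖y‖ := by have := norm_add_le (x - y) y; simpa using this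
  have hP := jbr_pos x; have hQ := jbr_pos y
  have hPs := jbr_sq x; have hQs := jbr_sq y
  have hy : (0:ℝ) ≤ ‖y‖ := norm_nonneg y
  have ht : (0:ℝ) ≤ ‖x - y‖ := norm_nonneg _
  have hm0 : (0:ℝ) < max 1 ‖x - y‖ := lt_of_lt_of_le one_pos (le_max_left _ _)
  have hm3 : 1 + ‖x - y‖ ^ 2 ≤ 2 * (max 1 ‖x - y‖) ^ 2 := by
    rcases le_total ‖x - y‖ 1 with h | h
    · rw [max_eq_left h]; nlinarith
    · rw [max_eq_right h]; nlinarith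
  set M : ℝ := max 1 ‖x - y‖
  have hx0 : (0:ℝ) ≤ ‖x‖ := norm_nonneg x
  have h1 : ‖x‖ ^ 2 ≤ (‖x - y‖ + ‖y‖) ^ 2 := by nlinarith [hx0, hx]
  have h2 : 1 + (‖x - y‖ + ‖y‖) ^ 2 ≤ 2 * (1 + ‖x - y‖ ^ 2) * (1 + ‖y‖ ^ 2) := by
    nlinarith [sq_nonneg (‖x - y‖ - ‖y‖), sq_nonneg (‖x - y‖ * ‖y‖)]
  have h3 : 2 * (1 + ‖x - y‖ ^ 2) * (1 + ‖y‖ ^ 2) ≤ 4 * M ^ 2 * jbr y ^ 2 := by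
    nlinarith [sq_nonneg ‖y‖]
  have key : jbr x ^ 2 ≤ (2 * M * jbr y) ^ 2 := by nlinarith
  nlinarith [mul_pos (mul_pos two_pos hm0) hQ, sq_nonneg (2 * M * jbr y - jbr x)]

lemma measurable_jbr : Measurable jbr := by
  apply Measurable.comp Real.continuous_sqrt.measurable
  exact measurable_const.add (measurable_norm.pow_const 2)

/-! ### The truncated logarithmic kernel -/

noncomputable def gker (z : E2) : ℝ := if ‖z‖ < 1 then -Real.log ‖z‖ else 0

lemma gker_nonneg (z : E2) : 0 ≤ gker z := by
  rw [gker]; split_ifs with h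
  · rcases eq_or_lt_of_le (norm_nonneg z) with h0 | h0
    · simp [← h0]
    · simpa using Real.log_nonpos (le_of_lt h0) (le_of_lt h)
  · exact le_refl 0

lemma gker_measurable : Measurable gker := by
  apply Measurable.ite (measurableSet_lt measurable_norm measurable_const)
  · exact (Real.measurable_log.comp measurable_norm).neg
  · exact measurable_const

/-! ### The pointwise kernel bound -/

lemma kernel_bound_aux {t P Q g : ℝ} (hP : 1 ≤ P) (hQ : 1 ≤ Q) (hg : 0 ≤ g) (ht : 0 ≤ t)
    (hub : t ≤ P * Q) (hlb : P ≤ 2 * max 1 t * Q)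
    (hgt : t < 1 → g = -Real.log t) (hge : 1 ≤ t → g = 0) :
    |Real.log (t / P)| ≤ 1 + 2 * Real.log Q + g := by
  have hP0 : (0:ℝ) < P := lt_of_lt_of_le one_pos hP
  have hQ0 : (0:ℝ) < Q := lt_of_lt_of_le one_pos hQ
  have hlQ : 0 ≤ Real.log Q := Real.log_nonneg hQ
  rcases eq_or_lt_of_le ht with h0 | h0
  · rw [← h0]; simp; positivity
  · have hM0 : (0:ℝ) < max 1 t := lt_of_lt_of_le one_pos (le_max_left _ _)
    have hlog2 : Real.log 2 ≤ 1 := by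
      have := Real.log_two_lt_d9; linarith
    rw [abs_le]
    constructor
    · rw [neg_le, ← Real.log_inv]
      have hinv : (t / P)⁻¹ = P / t := by field_simp
      rw [hinv]
      have harg : P / t ≤ 2 * max 1 t * Q / t := by gcongr
      have h1 : Real.log (P / t) ≤ Real.log (2 * max 1 t * Q / t) :=
        Real.log_le_log (by positivity) harg
      have h2 : Real.log (2 * max 1 t * Q / t)
          = Real.log 2 + Real.log (max 1 t) + Real.log Q - Real.log t := by
        rw [Real.log_div (by positivity) (ne_of_gt h0),
            Real.log_mul (by positivity) (ne_of_gt hQ0),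
            Real.log_mul (by norm_num) (ne_of_gt hM0)]
      rcases lt_or_ge t 1 with hc | hc
      · rw [max_eq_left (le_of_lt hc)] at h1 h2
        rw [hgt hc]
        simp only [Real.log_one] at h2
        linarith
      · rw [max_eq_right hc] at h1 h2
        rw [hge hc]
        have hlt : 0 ≤ Real.log t := Real.log_nonneg hc
        linarith
    · have h1 : t / P ≤ Q := by
        rw [div_le_iff₀ hP0]; linarith [hub]
      calc Real.log (t / P) ≤ Real.log Q := Real.log_le_log (by positivity) h1
      _ ≤ 1 + 2 * Real.log Q + g := by linarith

lemma kernel_bound_real (x y : E2) :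
    |Real.log (‖x - y‖ / jbr x)| ≤ 1 + 2 * Real.log (jbr y) + gker (x - y) := by
  apply kernel_bound_aux (jbr_ge_one x) (jbr_ge_one y) (gker_nonneg _) (norm_nonneg _)
    (norm_sub_le_jbr_mul x y) (jbr_le x y)
  · intro h; rw [gker, if_pos h]
  · intro h; rw [gker, if_neg (not_lt.2 h)]

lemma kernel_bound_ennreal (x y : E2) :
    (‖Real.log (‖x - y‖ / jbr x)‖₊ : ℝ≥0∞)
      ≤ 1 + 2 * ENNReal.ofReal (Real.log (jbr y)) + ENNReal.ofReal (gker (x - y)) := by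
  rw [← ofReal_norm_eq_coe_nnnorm, Real.norm_eq_abs]
  calc ENNReal.ofReal |Real.log (‖x - y‖ / jbr x)|
      ≤ ENNReal.ofReal (1 + 2 * Real.log (jbr y) + gker (x - y)) :=
        ENNReal.ofReal_le_ofReal (kernel_bound_real x y)
    _ = 1 + 2 * ENNReal.ofReal (Real.log (jbr y)) + ENNReal.ofReal (gker (x - y)) := by
        have h1 : (0:ℝ) ≤ 2 * Real.log (jbr y) := by
          have := log_jbr_nonneg y; linarith
        rw [ENNReal.ofReal_add (by linarith) (gker_nonneg _),
          ENNReal.ofReal_add (by norm_num) h1,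
          ENNReal.ofReal_one, ENNReal.ofReal_mul (by norm_num), ENNReal.ofReal_ofNat]

/-! ### Integrability of the kernel to a power -/

lemma neg_log_rpow_le {t s : ℝ} (hs : 1 ≤ s) (ht : 0 < t) (ht1 : t < 1) :
    (-Real.log t) ^ s ≤ s ^ s * t⁻¹ := by
  have hs0 : (0:ℝ) < s := lt_of_lt_of_le one_pos hs
  have hu : (0:ℝ) < t ^ (-(1/s)) := Real.rpow_pos_of_pos ht _
  have h1 : -Real.log t = s * Real.log (t ^ (-(1/s))) := by
    rw [Real.log_rpow ht]; field_simp
  have h2 : Real.log (t ^ (-(1/s))) ≤ t ^ (-(1/s)) := by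
    have := Real.log_le_sub_one_of_pos hu; linarith
  have h3 : -Real.log t ≤ s * t ^ (-(1/s)) := by
    rw [h1]; exact mul_le_mul_of_nonneg_left h2 (le_of_lt hs0)
  have hn : 0 ≤ -Real.log t := by
    have := Real.log_nonpos (le_of_lt ht) (le_of_lt ht1); linarith
  calc (-Real.log t) ^ s ≤ (s * t ^ (-(1/s))) ^ s :=
        Real.rpow_le_rpow hn h3 (le_of_lt hs0)
    _ = s ^ s * t⁻¹ := by
        rw [Real.mul_rpow (le_of_lt hs0) (le_of_lt hu), ← Real.rpow_mul (le_of_lt ht),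
          show -(1/s) * s = -1 by field_simp, Real.rpow_neg_one]

/-- Dyadic annuli around the origin. -/
def ann (n : ℕ) : Set E2 :=
  Metric.closedBall 0 (Real.exp (-(n:ℝ))) \ Metric.ball 0 (Real.exp (-(n:ℝ)-1))

lemma IG_lt_top {s : ℝ} (hs : 1 ≤ s) :
    ∫⁻ z : E2, (ENNReal.ofReal (gker z)) ^ s < ⊤ := by
  have hs0 : (0:ℝ) < s := lt_of_lt_of_le one_pos hs
  set B : ℝ≥0∞ := volume (Metric.ball (0:E2) 1) with hB
  have hBlt : B < ⊤ := measure_ball_lt_top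
  have hpt : ∀ z : E2, (ENNReal.ofReal (gker z)) ^ s
      ≤ ∑' n : ℕ, (ann n).indicator (fun _ => ENNReal.ofReal (s^s * Real.exp ((n:ℝ)+1))) z := by
    intro z
    by_cases h1 : ‖z‖ < 1
    · rcases eq_or_lt_of_le (norm_nonneg z) with h0 | h0
      · simp [gker, ← h0, ENNReal.zero_rpow_of_pos hs0]
      · set n : ℕ := ⌊-Real.log ‖z‖⌋₊ with hn
        have hlog : 0 ≤ -Real.log ‖z‖ := by
          have := Real.log_nonpos (le_of_lt h0) (le_of_lt h1); linarith
        have hfl1 : (n:ℝ) ≤ -Real.log ‖z‖ := Nat.floor_le hlog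
        have hfl2 : -Real.log ‖z‖ < (n:ℝ) + 1 := Nat.lt_floor_add_one _
        have hlb : Real.exp (-(n:ℝ)-1) ≤ ‖z‖ := by
          have h : -(n:ℝ)-1 ≤ Real.log ‖z‖ := by linarith
          calc Real.exp (-(n:ℝ)-1) ≤ Real.exp (Real.log ‖z‖) := Real.exp_le_exp.2 h
          _ = ‖z‖ := Real.exp_log h0
        have hmem : z ∈ ann n := by
          constructor
          · simp only [Metric.mem_closedBall, dist_zero_right]
            have h : Real.log ‖z‖ ≤ -(n:ℝ) := by linarith
            calc ‖z‖ = Real.exp (Real.log ‖z‖) := (Real.exp_log h0).symm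
            _ ≤ Real.exp (-(n:ℝ)) := Real.exp_le_exp.2 h
          · simp only [Metric.mem_ball, dist_zero_right, not_lt]
            exact hlb
        have hbound : (ENNReal.ofReal (gker z)) ^ s
            ≤ ENNReal.ofReal (s^s * Real.exp ((n:ℝ)+1)) := by
          rw [ENNReal.ofReal_rpow_of_nonneg (gker_nonneg z) (le_of_lt hs0)]
          apply ENNReal.ofReal_le_ofReal
          rw [gker, if_pos h1]
          calc (-Real.log ‖z‖) ^ s ≤ s^s * ‖z‖⁻¹ := neg_log_rpow_le hs h0 h1
          _ ≤ s^s * Real.exp ((n:ℝ)+1) := by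
              apply mul_le_mul_of_nonneg_left ?_ (by positivity)
              have := inv_anti₀ (Real.exp_pos _) hlb
              rwa [← Real.exp_neg, show -(-(n:ℝ)-1) = (n:ℝ)+1 by ring] at this
        calc (ENNReal.ofReal (gker z)) ^ s
            ≤ (ann n).indicator (fun _ => ENNReal.ofReal (s^s * Real.exp ((n:ℝ)+1))) z := by
              rw [Set.indicator_of_mem hmem]; exact hbound
          _ ≤ _ := ENNReal.le_tsum n
    · simp [gker, if_neg h1, ENNReal.zero_rpow_of_pos hs0]
  have hann_meas : ∀ n : ℕ, MeasurableSet (ann n) := fun n =>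
    measurableSet_closedBall.diff measurableSet_ball
  calc ∫⁻ z : E2, (ENNReal.ofReal (gker z)) ^ s
      ≤ ∫⁻ z, ∑' n : ℕ, (ann n).indicator
          (fun _ => ENNReal.ofReal (s^s * Real.exp ((n:ℝ)+1))) z :=
        lintegral_mono hpt
    _ = ∑' n : ℕ, ∫⁻ z, (ann n).indicator
          (fun _ => ENNReal.ofReal (s^s * Real.exp ((n:ℝ)+1))) z :=
        lintegral_tsum (fun n => (measurable_const.indicator (hann_meas n)).aemeasurable)
    _ = ∑' n : ℕ, ENNReal.ofReal (s^s * Real.exp ((n:ℝ)+1)) * volume (ann n) := by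
        congr 1; funext n; exact lintegral_indicator_const (hann_meas n) _
    _ ≤ ∑' n : ℕ, ENNReal.ofReal (s^s * Real.exp 1) * ENNReal.ofReal (Real.exp (-1:ℝ)) ^ n * B := by
        apply ENNReal.tsum_le_tsum
        intro n
        have hvol : volume (ann n) ≤ ENNReal.ofReal ((Real.exp (-(n:ℝ)))^2) * B := by
          calc volume (ann n) ≤ volume (Metric.closedBall (0:E2) (Real.exp (-(n:ℝ)))) :=
                measure_mono Set.diff_subset
          _ = ENNReal.ofReal ((Real.exp (-(n:ℝ)))^(Module.finrank ℝ E2)) * B :=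
                Measure.addHaar_closedBall volume 0 (le_of_lt (Real.exp_pos _))
          _ = ENNReal.ofReal ((Real.exp (-(n:ℝ)))^2) * B := by
                norm_num [finrank_euclideanSpace]
        calc ENNReal.ofReal (s^s * Real.exp ((n:ℝ)+1)) * volume (ann n)
            ≤ ENNReal.ofReal (s^s * Real.exp ((n:ℝ)+1))
                * (ENNReal.ofReal ((Real.exp (-(n:ℝ)))^2) * B) :=
              mul_le_mul_right hvol _
          _ = ENNReal.ofReal (s^s * Real.exp ((n:ℝ)+1) * (Real.exp (-(n:ℝ)))^2) * B := by
              rw [← mul_assoc, ← ENNReal.ofReal_mul (by positivity)]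
          _ = ENNReal.ofReal (s^s * Real.exp 1 * (Real.exp (-1:ℝ))^n) * B := by
              congr 2
              have h : Real.exp ((n:ℝ)+1) * Real.exp (-(n:ℝ))^2
                  = Real.exp 1 * Real.exp (-1:ℝ)^n := by
                rw [← Real.exp_nat_mul, ← Real.exp_nat_mul, ← Real.exp_add, ← Real.exp_add]
                congr 1; push_cast; ring
              rw [mul_assoc, h, ← mul_assoc]
          _ = ENNReal.ofReal (s^s * Real.exp 1) * ENNReal.ofReal (Real.exp (-1:ℝ)) ^ n * B := by
              rw [ENNReal.ofReal_mul (by positivity),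
                ENNReal.ofReal_pow (le_of_lt (Real.exp_pos _))]
    _ < ⊤ := by
        rw [ENNReal.tsum_mul_right, ENNReal.tsum_mul_left, ENNReal.tsum_geometric]
        refine ENNReal.mul_lt_top (ENNReal.mul_lt_top ENNReal.ofReal_lt_top ?_) hBlt
        rw [ENNReal.inv_lt_top, tsub_pos_iff_lt, ENNReal.ofReal_lt_one]
        exact Real.exp_lt_one_iff.2 (by norm_num)

/-! ### Young's inequality for nonnegative kernels -/

lemma young_conv {s : ℝ} (hs : 1 < s) {G h : E2 → ℝ≥0∞}
    (hG : Measurable G) (hh : Measurable h) :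
    ∫⁻ x, (∫⁻ y, G (x - y) * h y) ^ s ≤ (∫⁻ z, G z ^ s) * (∫⁻ y, h y) ^ s := by
  have hs0 : s ≠ 0 := by linarith
  have hs1 : (0:ℝ) ≤ s - 1 := by linarith
  set s' : ℝ := Real.conjExponent s with hs'def
  have hconj : s.HolderConjugate s' := Real.HolderConjugate.conjExponent hs
  have hsum : s⁻¹ + s'⁻¹ = 1 := hconj.inv_add_inv_eq_one
  have hs'0 : (0:ℝ) < s' := hconj.symm.pos
  have hs'inv : (0:ℝ) ≤ s'⁻¹ := by positivity
  have hsinv : (0:ℝ) ≤ s⁻¹ := by positivity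
  have hexp : s'⁻¹ * s = s - 1 := by
    have h1 : s'⁻¹ = 1 - s⁻¹ := by linarith
    rw [h1]; field_simp
  have hGs : Measurable fun z => G z ^ s := hG.pow_const _
  have hGx : ∀ x : E2, Measurable fun y : E2 => G (x - y) := fun x =>
    hG.comp (measurable_const.sub measurable_id)
  have inner_step : ∀ x, (∫⁻ y, G (x - y) * h y) ^ s
      ≤ (∫⁻ y, G (x - y) ^ s * h y) * (∫⁻ y, h y) ^ (s - 1) := by
    intro x
    have key : (∫⁻ y, G (x - y) * h y)
        ≤ (∫⁻ y, G (x - y) ^ s * h y) ^ s⁻¹ * (∫⁻ y, h y) ^ s'⁻¹ := by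
      have hle : (∫⁻ y, G (x - y) * h y)
          = ∫⁻ y, ((fun y => G (x - y) * h y ^ s⁻¹) * fun y => h y ^ s'⁻¹) y := by
        congr 1; funext y
        simp only [Pi.mul_apply]
        rw [mul_assoc, ← ENNReal.rpow_add_of_nonneg _ _ hsinv hs'inv, hsum, ENNReal.rpow_one]
      rw [hle]
      have := ENNReal.lintegral_mul_le_Lp_mul_Lq volume hconj
        (f := fun y => G (x - y) * h y ^ s⁻¹) (g := fun y => h y ^ s'⁻¹)
        ((hGx x).mul (hh.pow_const _)).aemeasurable (hh.pow_const _).aemeasurable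
      refine this.trans (le_of_eq ?_)
      rw [one_div, one_div]
      congr 2
      · congr 1; funext y
        rw [ENNReal.mul_rpow_of_nonneg _ _ (by linarith), ← ENNReal.rpow_mul,
          inv_mul_cancel₀ hs0, ENNReal.rpow_one]
      · congr 1; funext y
        rw [← ENNReal.rpow_mul, inv_mul_cancel₀ (ne_of_gt hs'0), ENNReal.rpow_one]
    calc (∫⁻ y, G (x - y) * h y) ^ s
        ≤ ((∫⁻ y, G (x - y) ^ s * h y) ^ s⁻¹ * (∫⁻ y, h y) ^ s'⁻¹) ^ s :=
          ENNReal.rpow_le_rpow key (by linarith)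
      _ = (∫⁻ y, G (x - y) ^ s * h y) * (∫⁻ y, h y) ^ (s - 1) := by
          rw [ENNReal.mul_rpow_of_nonneg _ _ (by linarith), ← ENNReal.rpow_mul,
            ← ENNReal.rpow_mul, inv_mul_cancel₀ hs0, ENNReal.rpow_one, hexp]
  calc ∫⁻ x, (∫⁻ y, G (x - y) * h y) ^ s
      ≤ ∫⁻ x, (∫⁻ y, G (x - y) ^ s * h y) * (∫⁻ y, h y) ^ (s - 1) :=
        lintegral_mono inner_step
    _ = (∫⁻ x, ∫⁻ y, G (x - y) ^ s * h y) * (∫⁻ y, h y) ^ (s - 1) := by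
        apply lintegral_mul_const
        apply Measurable.lintegral_prod_right
        exact (hGs.comp ((measurable_fst.sub measurable_snd))).mul (hh.comp measurable_snd)
    _ = (∫⁻ y, ∫⁻ x, G (x - y) ^ s * h y) * (∫⁻ y, h y) ^ (s - 1) := by
        congr 1
        apply lintegral_lintegral_swap
        exact ((hGs.comp ((measurable_fst.sub measurable_snd))).mul
          (hh.comp measurable_snd)).aemeasurable
    _ = ((∫⁻ z, G z ^ s) * ∫⁻ y, h y) * (∫⁻ y, h y) ^ (s - 1) := by
        congr 1
        calc ∫⁻ y, ∫⁻ x, G (x - y) ^ s * h y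
            = ∫⁻ y, (∫⁻ x, G (x - y) ^ s) * h y := by
              congr 1; funext y; exact lintegral_mul_const _ (hGs.comp (measurable_sub_const y))
          _ = ∫⁻ y, (∫⁻ z, G z ^ s) * h y := by
              congr 1; funext y
              rw [lintegral_sub_right_eq_self (fun z => G z ^ s) y]
          _ = (∫⁻ z, G z ^ s) * ∫⁻ y, h y := lintegral_const_mul _ hh
    _ = (∫⁻ z, G z ^ s) * (∫⁻ y, h y) ^ s := by
        rw [mul_assoc]
        congr 1
        have hss : (1:ℝ) + (s-1) = s := by ring
        calc (∫⁻ y, h y) * (∫⁻ y, h y) ^ (s - 1)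
            = (∫⁻ y, h y) ^ (1:ℝ) * (∫⁻ y, h y) ^ (s - 1) := by rw [ENNReal.rpow_one]
          _ = (∫⁻ y, h y) ^ s := by
              rw [← ENNReal.rpow_add_of_nonneg _ _ zero_le_one hs1, hss]

/-! ### L² helpers -/

lemma lintegral_sq_eq (f : E2 → ℂ) :
    ∫⁻ x, (‖f x‖₊ : ℝ≥0∞) * (‖f x‖₊ : ℝ≥0∞) = (eLpNorm f 2 volume) ^ 2 := by
  rw [eLpNorm_eq_lintegral_rpow_enorm_toReal two_ne_zero ENNReal.ofNat_ne_top]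
  rw [← ENNReal.rpow_natCast _ 2, ← ENNReal.rpow_mul]
  norm_num
  congr 1; funext x
  exact (sq _).symm

lemma eLpNorm_two_eq (f : E2 → ℂ) :
    eLpNorm f 2 volume = (∫⁻ x, (‖f x‖₊ : ℝ≥0∞) ^ (2:ℝ)) ^ (1/(2:ℝ)) := by
  rw [eLpNorm_eq_lintegral_rpow_enorm_toReal two_ne_zero ENNReal.ofNat_ne_top]
  norm_num
  rfl

lemma lintegral_CS (f g : E2 → ℂ) (hf : Measurable f) (hg : Measurable g) :
    ∫⁻ x, (‖f x‖₊ : ℝ≥0∞) * (‖g x‖₊ : ℝ≥0∞) ≤ eLpNorm f 2 volume * eLpNorm g 2 volume := by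
  have hconj : (2:ℝ).HolderConjugate 2 := Real.HolderConjugate.two_two
  have := ENNReal.lintegral_mul_le_Lp_mul_Lq volume hconj
    (f := fun x => (‖f x‖₊ : ℝ≥0∞)) (g := fun x => (‖g x‖₊ : ℝ≥0∞))
    hf.enorm.aemeasurable hg.enorm.aemeasurable
  refine this.trans (le_of_eq ?_)
  rw [eLpNorm_eq_lintegral_rpow_enorm_toReal two_ne_zero ENNReal.ofNat_ne_top,
    eLpNorm_eq_lintegral_rpow_enorm_toReal two_ne_zero ENNReal.ofNat_ne_top]
  norm_num
  rfl

lemma eLpNorm_ofReal_eq (f : E2 → ℂ) {r : ℝ} (hr : 0 < r) :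
    eLpNorm f (ENNReal.ofReal r) volume
      = (∫⁻ x, (‖f x‖₊ : ℝ≥0∞) ^ r) ^ (1/r) := by
  rw [eLpNorm_eq_lintegral_rpow_enorm_toReal (by simp [hr, ne_of_gt]) ENNReal.ofReal_ne_top,
    ENNReal.toReal_ofReal (le_of_lt hr)]
  rfl

lemma Lp_add4 {f1 f2 f3 f4 : E2 → ℝ≥0∞} (m1 : Measurable f1) (m2 : Measurable f2)
    (m3 : Measurable f3) (m4 : Measurable f4) :
    (∫⁻ x, (f1 x + f2 x + (f3 x + f4 x)) ^ (2:ℝ)) ^ (1/(2:ℝ))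
      ≤ ((∫⁻ x, f1 x ^ (2:ℝ)) ^ (1/(2:ℝ)) + (∫⁻ x, f2 x ^ (2:ℝ)) ^ (1/(2:ℝ)))
        + ((∫⁻ x, f3 x ^ (2:ℝ)) ^ (1/(2:ℝ)) + (∫⁻ x, f4 x ^ (2:ℝ)) ^ (1/(2:ℝ))) := by
  have h12 : (∫⁻ x, (f1 x + f2 x) ^ (2:ℝ)) ^ (1/(2:ℝ))
      ≤ (∫⁻ x, f1 x ^ (2:ℝ)) ^ (1/(2:ℝ)) + (∫⁻ x, f2 x ^ (2:ℝ)) ^ (1/(2:ℝ)) :=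
    ENNReal.lintegral_Lp_add_le m1.aemeasurable m2.aemeasurable one_le_two
  have h34 : (∫⁻ x, (f3 x + f4 x) ^ (2:ℝ)) ^ (1/(2:ℝ))
      ≤ (∫⁻ x, f3 x ^ (2:ℝ)) ^ (1/(2:ℝ)) + (∫⁻ x, f4 x ^ (2:ℝ)) ^ (1/(2:ℝ)) :=
    ENNReal.lintegral_Lp_add_le m3.aemeasurable m4.aemeasurable one_le_two
  have hmain : (∫⁻ x, (f1 x + f2 x + (f3 x + f4 x)) ^ (2:ℝ)) ^ (1/(2:ℝ))
      ≤ (∫⁻ x, (f1 x + f2 x) ^ (2:ℝ)) ^ (1/(2:ℝ)) + (∫⁻ x, (f3 x + f4 x) ^ (2:ℝ)) ^ (1/(2:ℝ)) :=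
    ENNReal.lintegral_Lp_add_le (m1.add m2).aemeasurable (m3.add m4).aemeasurable one_le_two
  exact hmain.trans (add_le_add h12 h34)

/-- Lipschitz estimate for the logarithmic Hartree nonlinearity: for `r ∈ (2,∞)`
there is `C = C(r)` such that for all measurable `u₁, u₂ : ℝ² → ℂ` for which the
norms appearing on the right-hand side are finite (and the inner integrals
converge),
`‖u₁ ∫ log(|x−y|/⟨x⟩)|u₁(y)|² dy − u₂ ∫ log(|x−y|/⟨x⟩)|u₂(y)|² dy‖_{L²}
  ≤ C(‖u₁‖₂² + ‖(log⟨·⟩)^{1/2}u₁‖₂²)(‖u₁−u₂‖₂ + ‖u₁−u₂‖_r)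
    + C(‖u₁‖₂ + ‖u₂‖₂ + ‖(log⟨·⟩)u₁‖₂ + ‖(log⟨·⟩)u₂‖₂)(‖u₂‖₂ + ‖u₂‖_r)‖u₁−u₂‖₂`. -/
theorem stmt15 (r : ℝ) (hr : 2 < r) :
    ∃ C : ℝ≥0, ∀ u₁ u₂ : E2 → ℂ, Measurable u₁ → Measurable u₂ →
      MemLp u₁ 2 volume → MemLp u₂ 2 volume →
      MemLp u₂ (ENNReal.ofReal r) volume →
      MemLp (fun x => u₁ x - u₂ x) (ENNReal.ofReal r) volume →
      MemLp (fun x => Real.sqrt (Real.log (jbr x)) • u₁ x) 2 volume →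
      MemLp (fun x => Real.log (jbr x) • u₁ x) 2 volume →
      MemLp (fun x => Real.log (jbr x) • u₂ x) 2 volume →
      (∀ x : E2, Integrable (fun y => Real.log (‖x - y‖ / jbr x) * ‖u₁ y‖ ^ 2) volume) →
      (∀ x : E2, Integrable (fun y => Real.log (‖x - y‖ / jbr x) * ‖u₂ y‖ ^ 2) volume) →
      eLpNorm (fun x =>
          u₁ x * ((∫ y, Real.log (‖x - y‖ / jbr x) * ‖u₁ y‖ ^ 2 : ℝ) : ℂ) -
          u₂ x * ((∫ y, Real.log (‖x - y‖ / jbr x) * ‖u₂ y‖ ^ 2 : ℝ) : ℂ)) 2 volume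
      ≤ C * ((eLpNorm u₁ 2 volume) ^ 2 +
              (eLpNorm (fun x => Real.sqrt (Real.log (jbr x)) • u₁ x) 2 volume) ^ 2) *
            (eLpNorm (fun x => u₁ x - u₂ x) 2 volume +
              eLpNorm (fun x => u₁ x - u₂ x) (ENNReal.ofReal r) volume)
        + C * (eLpNorm u₁ 2 volume + eLpNorm u₂ 2 volume +
                eLpNorm (fun x => Real.log (jbr x) • u₁ x) 2 volume +
                eLpNorm (fun x => Real.log (jbr x) • u₂ x) 2 volume) *
              (eLpNorm u₂ 2 volume + eLpNorm u₂ (ENNReal.ofReal r) volume) *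
              eLpNorm (fun x => u₁ x - u₂ x) 2 volume := by
  -- exponents
  have hr0 : (0:ℝ) < r := by linarith
  have hp1 : (1:ℝ) < r/2 := by linarith
  have hpq : (r/2).HolderConjugate ((r/2).conjExponent) := Real.HolderConjugate.conjExponent hp1
  set q : ℝ := (r/2).conjExponent with hqdef
  have hq1 : 1 < q := hpq.symm.lt
  set s : ℝ := 2 * q with hsdef
  have hs1 : 1 < s := by rw [hsdef]; nlinarith
  have hsge : (1:ℝ) ≤ s := le_of_lt hs1
  have hs0 : s ≠ 0 := by positivity
  -- the constant
  set Js : ℝ≥0∞ := ∫⁻ z : E2, (ENNReal.ofReal (gker z)) ^ s with hJsdef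
  have hJslt : Js < ⊤ := IG_lt_top hsge
  set KC : ℝ≥0∞ := Js ^ (1/s) with hKCdef
  have hKClt : KC < ⊤ := ENNReal.rpow_lt_top_of_nonneg (by positivity) (ne_of_lt hJslt)
  refine ⟨2 + KC.toNNReal, ?_⟩
  intro u₁ u₂ hm₁ hm₂ _ _ _ _ _ _ _ hint₁ hint₂
  have hCcoe : ((2 + KC.toNNReal : ℝ≥0) : ℝ≥0∞) = 2 + KC := by
    rw [ENNReal.coe_add, ENNReal.coe_ofNat, ENNReal.coe_toNNReal (ne_of_lt hKClt)]
  -- the ℝ≥0∞-valued ingredients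
  set D : E2 → ℝ≥0∞ := fun x => (‖u₁ x - u₂ x‖₊ : ℝ≥0∞) with hDdef
  set U1 : E2 → ℝ≥0∞ := fun x => (‖u₁ x‖₊ : ℝ≥0∞) with hU1def
  set U2 : E2 → ℝ≥0∞ := fun x => (‖u₂ x‖₊ : ℝ≥0∞) with hU2def
  set Lw : E2 → ℝ≥0∞ := fun y => ENNReal.ofReal (Real.log (jbr y)) with hLwdef
  set Gk : E2 → ℝ≥0∞ := fun z => ENNReal.ofReal (gker z) with hGkdef
  set h1f : E2 → ℝ≥0∞ := fun y => U1 y * U1 y with hh1fdef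
  set Wf : E2 → ℝ≥0∞ := fun y => D y * (U1 y + U2 y) with hWfdef
  have mD : Measurable D := (hm₁.sub hm₂).enorm
  have mU1 : Measurable U1 := hm₁.enorm
  have mU2 : Measurable U2 := hm₂.enorm
  have mLw : Measurable Lw := (Real.measurable_log.comp measurable_jbr).ennreal_ofReal
  have mGk : Measurable Gk := gker_measurable.ennreal_ofReal
  have mh1 : Measurable h1f := mU1.mul mU1
  have mW : Measurable Wf := mD.mul (mU1.add mU2)
  set T1 : E2 → ℝ≥0∞ := fun x => ∫⁻ y, Gk (x - y) * h1f y with hT1def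
  set T2 : E2 → ℝ≥0∞ := fun x => ∫⁻ y, Gk (x - y) * Wf y with hT2def
  have mker : ∀ (hf : E2 → ℝ≥0∞), Measurable hf →
      Measurable (Function.uncurry fun x y => Gk (x - y) * hf y) := fun hf mh =>
    (mGk.comp (measurable_fst.sub measurable_snd)).mul (mh.comp measurable_snd)
  have mT1 : Measurable T1 := Measurable.lintegral_prod_right (mker _ mh1)
  have mT2 : Measurable T2 := Measurable.lintegral_prod_right (mker _ mW)
  set a1 : ℝ≥0∞ := ∫⁻ y, (1 + 2 * Lw y) * h1f y with ha1def
  set b0 : ℝ≥0∞ := ∫⁻ y, (1 + 2 * Lw y) * Wf y with hb0def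
  -- shorthand norms
  set N1 : ℝ≥0∞ := eLpNorm u₁ 2 volume with hN1def
  set N2 : ℝ≥0∞ := eLpNorm u₂ 2 volume with hN2def
  set NS : ℝ≥0∞ := eLpNorm (fun x => Real.sqrt (Real.log (jbr x)) • u₁ x) 2 volume with hNSdef
  set NL1 : ℝ≥0∞ := eLpNorm (fun x => Real.log (jbr x) • u₁ x) 2 volume with hNL1def
  set NL2 : ℝ≥0∞ := eLpNorm (fun x => Real.log (jbr x) • u₂ x) 2 volume with hNL2def
  set ND2 : ℝ≥0∞ := eLpNorm (fun x => u₁ x - u₂ x) 2 volume with hND2def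
  set NDr : ℝ≥0∞ := eLpNorm (fun x => u₁ x - u₂ x) (ENNReal.ofReal r) volume with hNDrdef
  set N2r : ℝ≥0∞ := eLpNorm u₂ (ENNReal.ofReal r) volume with hN2rdef
  -- pointwise bound on the first inner integral (for a general function)
  have Abound : ∀ (u : E2 → ℂ), Measurable u → ∀ x : E2,
      (‖(∫ y, Real.log (‖x - y‖ / jbr x) * ‖u y‖ ^ 2 : ℝ)‖₊ : ℝ≥0∞)
        ≤ (∫⁻ y, (1 + 2 * Lw y) * ((‖u y‖₊ : ℝ≥0∞) * (‖u y‖₊ : ℝ≥0∞)))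
          + ∫⁻ y, Gk (x - y) * ((‖u y‖₊ : ℝ≥0∞) * (‖u y‖₊ : ℝ≥0∞)) := by
    intro u hm x
    have mV : Measurable fun y => (‖u y‖₊ : ℝ≥0∞) * (‖u y‖₊ : ℝ≥0∞) := hm.enorm.mul hm.enorm
    calc (‖(∫ y, Real.log (‖x - y‖ / jbr x) * ‖u y‖ ^ 2 : ℝ)‖₊ : ℝ≥0∞)
        ≤ ∫⁻ y, (‖Real.log (‖x - y‖ / jbr x) * ‖u y‖ ^ 2‖₊ : ℝ≥0∞) :=
          enorm_integral_le_lintegral_enorm _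
      _ ≤ ∫⁻ y, ((1 + 2 * Lw y) + Gk (x - y)) * ((‖u y‖₊ : ℝ≥0∞) * (‖u y‖₊ : ℝ≥0∞)) := by
          apply lintegral_mono; intro y
          dsimp only
          rw [nnnorm_mul, ENNReal.coe_mul]
          have hsq : (‖(‖u y‖ ^ 2 : ℝ)‖₊ : ℝ≥0∞) = (‖u y‖₊ : ℝ≥0∞) * (‖u y‖₊ : ℝ≥0∞) := by
            rw [sq, nnnorm_mul, ENNReal.coe_mul, nnnorm_norm]
          rw [hsq]
          exact mul_le_mul_left (kernel_bound_ennreal x y) _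
      _ = _ := by
          have hdist : ∀ y, ((1 + 2 * Lw y) + Gk (x - y)) * ((‖u y‖₊ : ℝ≥0∞) * (‖u y‖₊ : ℝ≥0∞))
              = (1 + 2 * Lw y) * ((‖u y‖₊ : ℝ≥0∞) * (‖u y‖₊ : ℝ≥0∞))
                + Gk (x - y) * ((‖u y‖₊ : ℝ≥0∞) * (‖u y‖₊ : ℝ≥0∞)) := fun y => add_mul _ _ _
          simp_rw [hdist]
          rw [lintegral_add_left (f := fun y => (1 + 2 * Lw y) * ((‖u y‖₊ : ℝ≥0∞) * (‖u y‖₊ : ℝ≥0∞)))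
              (((measurable_const.add (mLw.const_mul 2)).mul mV))]
  -- pointwise bound on the difference of the inner integrals
  have Bbound : ∀ x : E2,
      (‖((∫ y, Real.log (‖x - y‖ / jbr x) * ‖u₁ y‖ ^ 2)
          - (∫ y, Real.log (‖x - y‖ / jbr x) * ‖u₂ y‖ ^ 2) : ℝ)‖₊ : ℝ≥0∞)
        ≤ b0 + T2 x := by
    intro x
    rw [← integral_sub (hint₁ x) (hint₂ x)]
    calc (‖(∫ y, (Real.log (‖x - y‖ / jbr x) * ‖u₁ y‖ ^ 2
            - Real.log (‖x - y‖ / jbr x) * ‖u₂ y‖ ^ 2) : ℝ)‖₊ : ℝ≥0∞)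
        ≤ ∫⁻ y, (‖Real.log (‖x - y‖ / jbr x) * ‖u₁ y‖ ^ 2
            - Real.log (‖x - y‖ / jbr x) * ‖u₂ y‖ ^ 2‖₊ : ℝ≥0∞) :=
          enorm_integral_le_lintegral_enorm _
      _ ≤ ∫⁻ y, ((1 + 2 * Lw y) + Gk (x - y)) * Wf y := by
          apply lintegral_mono; intro y
          dsimp only
          have hfac : Real.log (‖x - y‖ / jbr x) * ‖u₁ y‖ ^ 2
              - Real.log (‖x - y‖ / jbr x) * ‖u₂ y‖ ^ 2
              = Real.log (‖x - y‖ / jbr x) * (‖u₁ y‖ ^ 2 - ‖u₂ y‖ ^ 2) := by ring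
          rw [hfac, nnnorm_mul, ENNReal.coe_mul]
          have h2 : (‖(‖u₁ y‖ ^ 2 - ‖u₂ y‖ ^ 2 : ℝ)‖₊ : ℝ≥0∞) ≤ Wf y := by
            rw [← ofReal_norm_eq_coe_nnnorm, Real.norm_eq_abs]
            have habs : |‖u₁ y‖ ^ 2 - ‖u₂ y‖ ^ 2| ≤ ‖u₁ y - u₂ y‖ * (‖u₁ y‖ + ‖u₂ y‖) := by
              have h3 : ‖u₁ y‖ ^ 2 - ‖u₂ y‖ ^ 2
                  = (‖u₁ y‖ - ‖u₂ y‖) * (‖u₁ y‖ + ‖u₂ y‖) := by ring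
              rw [h3, abs_mul, abs_of_nonneg (by positivity : (0:ℝ) ≤ ‖u₁ y‖ + ‖u₂ y‖)]
              exact mul_le_mul_of_nonneg_right (abs_norm_sub_norm_le _ _) (by positivity)
            refine (ENNReal.ofReal_le_ofReal habs).trans (le_of_eq ?_)
            rw [ENNReal.ofReal_mul (norm_nonneg _),
              ENNReal.ofReal_add (norm_nonneg _) (norm_nonneg _),
              ofReal_norm_eq_coe_nnnorm, ofReal_norm_eq_coe_nnnorm, ofReal_norm_eq_coe_nnnorm]
          exact mul_le_mul' (kernel_bound_ennreal x y) h2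
      _ = b0 + T2 x := by
          have hdist : ∀ y, ((1 + 2 * Lw y) + Gk (x - y)) * Wf y
              = (1 + 2 * Lw y) * Wf y + Gk (x - y) * Wf y := fun y => add_mul _ _ _
          simp_rw [hdist]
          rw [lintegral_add_left (f := fun y => (1 + 2 * Lw y) * Wf y)
              (((measurable_const.add (mLw.const_mul 2)).mul mW))]
  -- main pointwise bound
  have main_pt : ∀ x : E2,
      (‖u₁ x * ((∫ y, Real.log (‖x - y‖ / jbr x) * ‖u₁ y‖ ^ 2 : ℝ) : ℂ)
        - u₂ x * ((∫ y, Real.log (‖x - y‖ / jbr x) * ‖u₂ y‖ ^ 2 : ℝ) : ℂ)‖₊ : ℝ≥0∞)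
      ≤ (a1 * D x + T1 x * D x) + (b0 * U2 x + T2 x * U2 x) := by
    intro x
    set A1 : ℝ := ∫ y, Real.log (‖x - y‖ / jbr x) * ‖u₁ y‖ ^ 2 with hA1
    set A2 : ℝ := ∫ y, Real.log (‖x - y‖ / jbr x) * ‖u₂ y‖ ^ 2 with hA2
    have hsplit : u₁ x * (A1 : ℂ) - u₂ x * (A2 : ℂ)
        = (u₁ x - u₂ x) * (A1 : ℂ) + u₂ x * ((A1 - A2 : ℝ) : ℂ) := by
      push_cast; ring
    rw [hsplit]
    calc (‖(u₁ x - u₂ x) * (A1 : ℂ) + u₂ x * ((A1 - A2 : ℝ) : ℂ)‖₊ : ℝ≥0∞)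
        ≤ (‖(u₁ x - u₂ x) * (A1 : ℂ)‖₊ : ℝ≥0∞) + (‖u₂ x * ((A1 - A2 : ℝ) : ℂ)‖₊ : ℝ≥0∞) := by
          exact_mod_cast nnnorm_add_le _ _
      _ = D x * (‖(A1 : ℝ)‖₊ : ℝ≥0∞) + U2 x * (‖(A1 - A2 : ℝ)‖₊ : ℝ≥0∞) := by
          rw [nnnorm_mul, nnnorm_mul, Complex.nnnorm_real, Complex.nnnorm_real]
          push_cast; ring
      _ ≤ D x * (a1 + T1 x) + U2 x * (b0 + T2 x) := by
          gcongr
          · exact Abound u₁ hm₁ x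
          · exact Bbound x
      _ = (a1 * D x + T1 x * D x) + (b0 * U2 x + T2 x * U2 x) := by ring
  -- identities for the logarithmic weights
  have hIh1 : ∫⁻ y, h1f y = N1 ^ 2 := lintegral_sq_eq u₁
  have hsmul_sqrt : ∀ y : E2, (‖Real.sqrt (Real.log (jbr y)) • u₁ y‖₊ : ℝ≥0∞)
      = ENNReal.ofReal (Real.sqrt (Real.log (jbr y))) * U1 y := by
    intro y
    rw [nnnorm_smul, ENNReal.coe_mul]
    congr 1
    rw [← ofReal_norm_eq_coe_nnnorm, Real.norm_eq_abs, abs_of_nonneg (Real.sqrt_nonneg _)]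
  have hILw : ∫⁻ y, Lw y * h1f y = NS ^ 2 := by
    rw [hNSdef, ← lintegral_sq_eq]
    congr 1; funext y
    rw [hsmul_sqrt y, hh1fdef]
    rw [show ENNReal.ofReal (Real.sqrt (Real.log (jbr y))) * U1 y
        * (ENNReal.ofReal (Real.sqrt (Real.log (jbr y))) * U1 y)
        = (ENNReal.ofReal (Real.sqrt (Real.log (jbr y)))
            * ENNReal.ofReal (Real.sqrt (Real.log (jbr y)))) * (U1 y * U1 y) by ring,
      ← ENNReal.ofReal_mul (Real.sqrt_nonneg _), Real.mul_self_sqrt (log_jbr_nonneg y)]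
  have hlogU : ∀ (u : E2 → ℂ) (y : E2), Lw y * (‖u y‖₊ : ℝ≥0∞)
      = (‖Real.log (jbr y) • u y‖₊ : ℝ≥0∞) := by
    intro u y
    rw [nnnorm_smul, ENNReal.coe_mul]
    congr 1
    rw [← ofReal_norm_eq_coe_nnnorm, Real.norm_eq_abs, abs_of_nonneg (log_jbr_nonneg y)]
  -- bound for a1
  have ha1split : a1 = (∫⁻ y, h1f y) + 2 * ∫⁻ y, Lw y * h1f y := by
    rw [ha1def]
    have hdist : ∀ y, (1 + 2 * Lw y) * h1f y = h1f y + 2 * (Lw y * h1f y) := by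
      intro y; ring
    simp_rw [hdist]
    rw [lintegral_add_left mh1, lintegral_const_mul _ (f := fun y => Lw y * h1f y) (mLw.mul mh1)]
  have ha1 : a1 ≤ 2 * (N1 ^ 2 + NS ^ 2) := by
    rw [ha1split, hIh1, hILw]
    calc N1 ^ 2 + 2 * NS ^ 2 ≤ 2 * N1 ^ 2 + 2 * NS ^ 2 := by
          gcongr
          exact le_mul_of_one_le_left zero_le one_le_two
      _ = 2 * (N1 ^ 2 + NS ^ 2) := by ring
  -- bounds for b0
  set Z : ℝ≥0∞ := N1 + N2 + NL1 + NL2 with hZdef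
  have hIW : ∫⁻ y, Wf y ≤ ND2 * (N1 + N2) := by
    have hdist : ∀ y, Wf y = D y * U1 y + D y * U2 y := by
      intro y; rw [hWfdef]; ring
    calc ∫⁻ y, Wf y = (∫⁻ y, D y * U1 y) + ∫⁻ y, D y * U2 y := by
          simp_rw [hdist]; exact lintegral_add_left (mD.mul mU1) _
      _ ≤ ND2 * N1 + ND2 * N2 :=
          add_le_add (lintegral_CS _ _ (hm₁.sub hm₂) hm₁) (lintegral_CS _ _ (hm₁.sub hm₂) hm₂)
      _ = ND2 * (N1 + N2) := (mul_add _ _ _).symm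
  have hILwW : ∫⁻ y, Lw y * Wf y ≤ ND2 * (NL1 + NL2) := by
    have hdist : ∀ y, Lw y * Wf y = D y * (Lw y * U1 y) + D y * (Lw y * U2 y) := by
      intro y; rw [hWfdef]; ring
    have mlog1 : Measurable fun x => Real.log (jbr x) • u₁ x :=
      ((Real.measurable_log.comp measurable_jbr)).smul hm₁
    have mlog2 : Measurable fun x => Real.log (jbr x) • u₂ x :=
      ((Real.measurable_log.comp measurable_jbr)).smul hm₂
    calc ∫⁻ y, Lw y * Wf y
        = (∫⁻ y, D y * (‖Real.log (jbr y) • u₁ y‖₊ : ℝ≥0∞))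
          + ∫⁻ y, D y * (‖Real.log (jbr y) • u₂ y‖₊ : ℝ≥0∞) := by
          simp_rw [hdist, hU1def, hU2def, hlogU u₁, hlogU u₂]
          exact lintegral_add_left (mD.mul mlog1.enorm) _
      _ ≤ ND2 * NL1 + ND2 * NL2 :=
          add_le_add (lintegral_CS _ _ (hm₁.sub hm₂) mlog1) (lintegral_CS _ _ (hm₁.sub hm₂) mlog2)
      _ = ND2 * (NL1 + NL2) := (mul_add _ _ _).symm
  have hb0split : b0 = (∫⁻ y, Wf y) + 2 * ∫⁻ y, Lw y * Wf y := by
    rw [hb0def]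
    have hdist : ∀ y, (1 + 2 * Lw y) * Wf y = Wf y + 2 * (Lw y * Wf y) := by
      intro y; ring
    simp_rw [hdist]
    rw [lintegral_add_left mW, lintegral_const_mul _ (f := fun y => Lw y * Wf y) (mLw.mul mW)]
  have hb0 : b0 ≤ 2 * (ND2 * Z) := by
    rw [hb0split]
    calc (∫⁻ y, Wf y) + 2 * ∫⁻ y, Lw y * Wf y
        ≤ ND2 * (N1 + N2) + 2 * (ND2 * (NL1 + NL2)) :=
          add_le_add hIW (mul_le_mul_right hILwW 2)
      _ ≤ 2 * (ND2 * (N1 + N2)) + 2 * (ND2 * (NL1 + NL2)) :=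
          add_le_add_left (le_mul_of_one_le_left zero_le one_le_two) _
      _ = 2 * (ND2 * Z) := by rw [hZdef]; ring
  -- Hölder + Young estimate for the convolution terms
  have JT : ∀ (hf : E2 → ℝ≥0∞), Measurable hf → ∀ (v : E2 → ℂ), Measurable v →
      (∫⁻ x, ((∫⁻ y, Gk (x - y) * hf y) * (‖v x‖₊ : ℝ≥0∞)) ^ (2:ℝ)) ^ (1/(2:ℝ))
        ≤ KC * (∫⁻ y, hf y) * eLpNorm v (ENNReal.ofReal r) volume := by
    intro hf mhf v mv
    set T : E2 → ℝ≥0∞ := fun x => ∫⁻ y, Gk (x - y) * hf y with hTdef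
    have mT : Measurable T := Measurable.lintegral_prod_right (mker _ mhf)
    have step1 : ∫⁻ x, (T x * (‖v x‖₊ : ℝ≥0∞)) ^ (2:ℝ)
        ≤ (∫⁻ x, (‖v x‖₊ : ℝ≥0∞) ^ r) ^ (1/(r/2)) * (∫⁻ x, T x ^ s) ^ (1/q) := by
      have hH := ENNReal.lintegral_mul_le_Lp_mul_Lq volume hpq
        (f := fun x => (‖v x‖₊ : ℝ≥0∞) ^ (2:ℝ)) (g := fun x => T x ^ (2:ℝ))
        (mv.enorm.pow_const _).aemeasurable (mT.pow_const _).aemeasurable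
      simp only [Pi.mul_apply] at hH
      have her : (2:ℝ) * (r/2) = r := by ring
      have heq : (2:ℝ) * q = s := by rw [hsdef]
      have hsw : ∀ x : E2, (T x * (‖v x‖₊ : ℝ≥0∞)) ^ (2:ℝ)
          = ((‖v x‖₊ : ℝ≥0∞) ^ (2:ℝ)) * (T x ^ (2:ℝ)) := by
        intro x
        rw [ENNReal.mul_rpow_of_nonneg _ _ (by norm_num : (0:ℝ) ≤ 2), mul_comm]
      have hv : ∀ x : E2, ((‖v x‖₊ : ℝ≥0∞) ^ (2:ℝ)) ^ (r/2) = (‖v x‖₊ : ℝ≥0∞) ^ r := by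
        intro x; rw [← ENNReal.rpow_mul, her]
      have hT2e : ∀ x : E2, (T x ^ (2:ℝ)) ^ q = T x ^ s := by
        intro x; rw [← ENNReal.rpow_mul, heq]
      simp_rw [hv, hT2e] at hH
      simp_rw [hsw]
      exact hH
    have step2 : (∫⁻ x, (T x * (‖v x‖₊ : ℝ≥0∞)) ^ (2:ℝ)) ^ (1/(2:ℝ))
        ≤ (∫⁻ x, (‖v x‖₊ : ℝ≥0∞) ^ r) ^ (1/r) * (∫⁻ x, T x ^ s) ^ (1/s) := by
      calc (∫⁻ x, (T x * (‖v x‖₊ : ℝ≥0∞)) ^ (2:ℝ)) ^ (1/(2:ℝ))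
          ≤ ((∫⁻ x, (‖v x‖₊ : ℝ≥0∞) ^ r) ^ (1/(r/2)) * (∫⁻ x, T x ^ s) ^ (1/q)) ^ (1/(2:ℝ)) :=
            ENNReal.rpow_le_rpow step1 (by norm_num)
        _ = (∫⁻ x, (‖v x‖₊ : ℝ≥0∞) ^ r) ^ (1/r) * (∫⁻ x, T x ^ s) ^ (1/s) := by
            rw [ENNReal.mul_rpow_of_nonneg _ _ (by norm_num : (0:ℝ) ≤ 1/2),
              ← ENNReal.rpow_mul, ← ENNReal.rpow_mul]
            congr 2
            · field_simp
            · rw [hsdef]; field_simp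
    have step3 : (∫⁻ x, T x ^ s) ^ (1/s) ≤ KC * ∫⁻ y, hf y := by
      have hY := young_conv hs1 mGk mhf
      calc (∫⁻ x, T x ^ s) ^ (1/s)
          ≤ (Js * (∫⁻ y, hf y) ^ s) ^ (1/s) := ENNReal.rpow_le_rpow hY (by positivity)
        _ = KC * ∫⁻ y, hf y := by
            rw [ENNReal.mul_rpow_of_nonneg _ _ (by positivity : (0:ℝ) ≤ 1/s), hKCdef,
              ← ENNReal.rpow_mul]
            congr 1
            rw [show s * (1/s) = 1 by field_simp, ENNReal.rpow_one]
    calc (∫⁻ x, ((∫⁻ y, Gk (x - y) * hf y) * (‖v x‖₊ : ℝ≥0∞)) ^ (2:ℝ)) ^ (1/(2:ℝ))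
        ≤ (∫⁻ x, (‖v x‖₊ : ℝ≥0∞) ^ r) ^ (1/r) * (∫⁻ x, T x ^ s) ^ (1/s) := step2
      _ ≤ (∫⁻ x, (‖v x‖₊ : ℝ≥0∞) ^ r) ^ (1/r) * (KC * ∫⁻ y, hf y) :=
          mul_le_mul_right step3 _
      _ = KC * (∫⁻ y, hf y) * eLpNorm v (ENNReal.ofReal r) volume := by
          rw [eLpNorm_ofReal_eq v hr0]; ring
  -- the four term bounds
  have hterm1 : ∀ (c : ℝ≥0∞) (f : E2 → ℂ), Measurable f →
      (∫⁻ x, (c * (‖f x‖₊ : ℝ≥0∞)) ^ (2:ℝ)) ^ (1/(2:ℝ)) = c * eLpNorm f 2 volume := by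
    intro c f mf
    rw [eLpNorm_two_eq]
    simp_rw [ENNReal.mul_rpow_of_nonneg _ _ (by norm_num : (0:ℝ) ≤ 2)]
    rw [lintegral_const_mul _ (f := fun x => (‖f x‖₊ : ℝ≥0∞) ^ (2:ℝ)) (mf.enorm.pow_const _),
      ENNReal.mul_rpow_of_nonneg _ _ (by norm_num : (0:ℝ) ≤ 1/2), ← ENNReal.rpow_mul]
    norm_num
  have hP1 : (∫⁻ x, (a1 * D x) ^ (2:ℝ)) ^ (1/(2:ℝ)) = a1 * ND2 :=
    hterm1 a1 (fun x => u₁ x - u₂ x) (hm₁.sub hm₂)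
  have hP3 : (∫⁻ x, (b0 * U2 x) ^ (2:ℝ)) ^ (1/(2:ℝ)) = b0 * N2 :=
    hterm1 b0 u₂ hm₂
  have hP2 : (∫⁻ x, (T1 x * D x) ^ (2:ℝ)) ^ (1/(2:ℝ)) ≤ KC * N1 ^ 2 * NDr := by
    have := JT h1f mh1 (fun x => u₁ x - u₂ x) (hm₁.sub hm₂)
    rw [hIh1] at this
    exact this
  have hP4 : (∫⁻ x, (T2 x * U2 x) ^ (2:ℝ)) ^ (1/(2:ℝ)) ≤ KC * (ND2 * (N1 + N2)) * N2r := by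
    refine (JT Wf mW u₂ hm₂).trans ?_
    exact mul_le_mul_left (mul_le_mul_right hIW _) _
  -- put everything together
  have hsum : eLpNorm (fun x =>
        u₁ x * ((∫ y, Real.log (‖x - y‖ / jbr x) * ‖u₁ y‖ ^ 2 : ℝ) : ℂ) -
        u₂ x * ((∫ y, Real.log (‖x - y‖ / jbr x) * ‖u₂ y‖ ^ 2 : ℝ) : ℂ)) 2 volume
      ≤ (a1 * ND2 + KC * N1 ^ 2 * NDr) + (b0 * N2 + KC * (ND2 * (N1 + N2)) * N2r) := by
    calc eLpNorm (fun x =>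
          u₁ x * ((∫ y, Real.log (‖x - y‖ / jbr x) * ‖u₁ y‖ ^ 2 : ℝ) : ℂ) -
          u₂ x * ((∫ y, Real.log (‖x - y‖ / jbr x) * ‖u₂ y‖ ^ 2 : ℝ) : ℂ)) 2 volume
        = (∫⁻ x, (‖u₁ x * ((∫ y, Real.log (‖x - y‖ / jbr x) * ‖u₁ y‖ ^ 2 : ℝ) : ℂ)
            - u₂ x * ((∫ y, Real.log (‖x - y‖ / jbr x) * ‖u₂ y‖ ^ 2 : ℝ) : ℂ)‖₊ : ℝ≥0∞)
              ^ (2:ℝ)) ^ (1/(2:ℝ)) := eLpNorm_two_eq _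
      _ ≤ (∫⁻ x, (a1 * D x + T1 x * D x + (b0 * U2 x + T2 x * U2 x)) ^ (2:ℝ)) ^ (1/(2:ℝ)) := by
          gcongr with x
          exact main_pt x
      _ ≤ (((∫⁻ x, (a1 * D x) ^ (2:ℝ)) ^ (1/(2:ℝ)) + (∫⁻ x, (T1 x * D x) ^ (2:ℝ)) ^ (1/(2:ℝ)))
            + ((∫⁻ x, (b0 * U2 x) ^ (2:ℝ)) ^ (1/(2:ℝ))
              + (∫⁻ x, (T2 x * U2 x) ^ (2:ℝ)) ^ (1/(2:ℝ)))) :=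
          Lp_add4 (measurable_const.mul mD) (mT1.mul mD)
            (measurable_const.mul mU2) (mT2.mul mU2)
      _ ≤ (a1 * ND2 + KC * N1 ^ 2 * NDr) + (b0 * N2 + KC * (ND2 * (N1 + N2)) * N2r) := by
          rw [hP1, hP3]
          exact add_le_add (add_le_add_right hP2 _) (add_le_add_right hP4 _)
  refine hsum.trans ?_
  rw [hCcoe]
  have hfinal1 : a1 * ND2 + KC * N1 ^ 2 * NDr ≤ (2 + KC) * (N1 ^ 2 + NS ^ 2) * (ND2 + NDr) := by
    have e1 : a1 ≤ (2 + KC) * (N1 ^ 2 + NS ^ 2) :=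
      ha1.trans (mul_le_mul_left le_self_add _)
    have e2 : KC * N1 ^ 2 ≤ (2 + KC) * (N1 ^ 2 + NS ^ 2) :=
      mul_le_mul' le_add_self le_self_add
    calc a1 * ND2 + KC * N1 ^ 2 * NDr
        ≤ (2 + KC) * (N1 ^ 2 + NS ^ 2) * ND2 + (2 + KC) * (N1 ^ 2 + NS ^ 2) * NDr :=
          add_le_add (mul_le_mul_left e1 _) (mul_le_mul_left e2 _)
      _ = (2 + KC) * (N1 ^ 2 + NS ^ 2) * (ND2 + NDr) := (mul_add _ _ _).symm
  have hfinal2 : b0 * N2 + KC * (ND2 * (N1 + N2)) * N2r ≤ (2 + KC) * Z * (N2 + N2r) * ND2 := by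
    have e1 : b0 * N2 ≤ (2 + KC) * Z * N2 * ND2 := by
      calc b0 * N2 ≤ 2 * (ND2 * Z) * N2 := mul_le_mul_left hb0 _
        _ = 2 * Z * N2 * ND2 := by ring
        _ ≤ (2 + KC) * Z * N2 * ND2 :=
            mul_le_mul_left (mul_le_mul_left (mul_le_mul_left le_self_add Z) N2) ND2
    have e2 : KC * (ND2 * (N1 + N2)) * N2r ≤ (2 + KC) * Z * N2r * ND2 := by
      calc KC * (ND2 * (N1 + N2)) * N2r = KC * (N1 + N2) * N2r * ND2 := by ring
        _ ≤ (2 + KC) * Z * N2r * ND2 := by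
            have hZle : N1 + N2 ≤ Z := by rw [hZdef]; exact le_self_add.trans le_self_add
            exact mul_le_mul_left (mul_le_mul_left
              (mul_le_mul' le_add_self hZle) N2r) ND2
    calc b0 * N2 + KC * (ND2 * (N1 + N2)) * N2r
        ≤ (2 + KC) * Z * N2 * ND2 + (2 + KC) * Z * N2r * ND2 := add_le_add e1 e2
      _ = (2 + KC) * Z * (N2 + N2r) * ND2 := by ring
  exact add_le_add hfinal1 hfinal2



end
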